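/- arXiv:1805.11137 — 2 statements merged into one kernel-verified Lean document; each statement's English description precedes it below -/
import Mathlib

section
/- (Composite discrete uniform Gronwall inequality.) Let G_n, H_n, P_n, V_n, Δt_n be nonnegative sequences satisfying V_{n+1} ≤ V_n + Δt_n (G_n V_n + H_n V_{n+1} + P_n) for all n ≥ n_0. Fix K_0 ≥ n_0 and N ∈ ℕ, set r = Σ_{n=K_0}^{N+K_0} Δt_n, and suppose Σ_{n=K_0}^{N+K_0} Δt_n G_n ≤ a_0, Σ_{n=K_0}^{N+K_0} Δt_n H_n ≤ a_1, Σ_{n=K_0}^{N+K_0} Δt_n P_n ≤ a_2, and Σ_{n=K_0}^{N+K_0} Δt_n V_n ≤ a_3. If additionally Δt_n H_n ≤ 1 − δ for all n ≥ n_0 for some δ ∈ (0,1], then V_{N+K_0+1} ≤ exp(a_0 + a_1/δ) (a_3/r + a_2), provided r > 0. -/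
/-!
The implicit step `V' ≤ V + Δt (G V + H V' + P)` is solved for `V'`: since `Δt H ≤ 1 - δ`,
`1 / (1 - Δt H) ≤ 1 + Δt H / δ ≤ exp (Δt H / δ)`, so `V' ≤ exp (Δt G + Δt H / δ) (V + Δt P)`.
Iterating from any `m ∈ [K₀, N + K₀]` bounds `V (N + K₀ + 1)` by `exp (a₀ + a₁ / δ) (V m + a₂)`;
averaging this bound with weights `Δt m` turns `V m` into `a₃ / r`.
-/

open Finset Real

namespace DiscreteGronwall

lemma one_le_one_sub_mul_one_add_div {y δ : ℝ} (hδ : 0 < δ) (hy : 0 ≤ y) (hyδ : y ≤ 1 - δ) :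
    1 ≤ (1 - y) * (1 + y / δ) := by
  have hexpand : (1 - y) * (1 + y / δ) = 1 + y * (1 - δ - y) / δ := by
    field_simp; ring
  have : 0 ≤ y * (1 - δ - y) / δ := div_nonneg (mul_nonneg hy (by linarith)) hδ.le
  linarith

lemma one_le_one_sub_mul_exp_div {y δ : ℝ} (hδ : 0 < δ) (hy : 0 ≤ y) (hyδ : y ≤ 1 - δ) :
    1 ≤ (1 - y) * exp (y / δ) := by
  calc 1 ≤ (1 - y) * (1 + y / δ) := one_le_one_sub_mul_one_add_div hδ hy hyδ
    _ ≤ (1 - y) * exp (y / δ) := by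
      gcongr
      · linarith
      · linarith [add_one_le_exp (y / δ)]

lemma le_exp_mul_of_le_implicit_step {v v' d g h p δ : ℝ} (hδ : 0 < δ) (hv : 0 ≤ v)
    (hd : 0 ≤ d) (hg : 0 ≤ g) (hh : 0 ≤ h) (hp : 0 ≤ p) (hdh : d * h ≤ 1 - δ)
    (hstep : v' ≤ v + d * (g * v + h * v' + p)) :
    v' ≤ exp (d * g + d * h / δ) * (v + d * p) := by
  have hdg : 0 ≤ d * g := mul_nonneg hd hg
  have hdp : 0 ≤ d * p := mul_nonneg hd hp
  have hpos : 0 < 1 - d * h := by linarith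
  have hinv : 1 ≤ (1 - d * h) * exp (d * h / δ) :=
    one_le_one_sub_mul_exp_div hδ (mul_nonneg hd hh) hdh
  have hsplit : (1 - d * h) * exp (d * g + d * h / δ)
      = exp (d * g) * ((1 - d * h) * exp (d * h / δ)) := by
    rw [exp_add]; ring
  have hgrowth : 1 + d * g ≤ (1 - d * h) * exp (d * g + d * h / δ) := by
    rw [hsplit]
    nlinarith [add_one_le_exp (d * g), one_le_exp hdg]
  have hone : 1 ≤ (1 - d * h) * exp (d * g + d * h / δ) := by linarith
  refine le_of_mul_le_mul_left ?_ hpos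
  calc (1 - d * h) * v' ≤ (1 + d * g) * v + d * p := by linarith
    _ ≤ (1 - d * h) * exp (d * g + d * h / δ) * v
        + (1 - d * h) * exp (d * g + d * h / δ) * (d * p) :=
      add_le_add (mul_le_mul_of_nonneg_right hgrowth hv) (le_mul_of_one_le_left hdp hone)
    _ = (1 - d * h) * (exp (d * g + d * h / δ) * (v + d * p)) := by ring

lemma le_exp_sum_mul_add_sum {V c p : ℕ → ℝ} {m : ℕ} (hc : ∀ n, m ≤ n → 0 ≤ c n)
    (hp : ∀ n, m ≤ n → 0 ≤ p n) (hstep : ∀ n, m ≤ n → V (n + 1) ≤ exp (c n) * (V n + p n))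
    (k : ℕ) (hk : m ≤ k) :
    V k ≤ exp (∑ n ∈ Ico m k, c n) * (V m + ∑ n ∈ Ico m k, p n) := by
  induction k, hk using Nat.le_induction with
  | base => simp
  | succ k hk ih =>
    have hexp_ge : 1 ≤ exp (∑ n ∈ Ico m k, c n) :=
      one_le_exp (sum_nonneg fun n hn => hc n (mem_Ico.1 hn).1)
    have hpk : 0 ≤ exp (c k) * p k := mul_nonneg (exp_pos _).le (hp k hk)
    rw [sum_Ico_succ_top hk, sum_Ico_succ_top hk, exp_add]
    calc V (k + 1) ≤ exp (c k) * (V k + p k) := hstep k hk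
      _ ≤ exp (c k) * (exp (∑ n ∈ Ico m k, c n) * (V m + ∑ n ∈ Ico m k, p n) + p k) := by
        gcongr
      _ ≤ exp (∑ n ∈ Ico m k, c n) * exp (c k) * (V m + (∑ n ∈ Ico m k, p n + p k)) := by
        nlinarith

lemma le_mul_div_add_of_forall_le {ι : Type*} {s : Finset ι} {w f : ι → ℝ} {u E a b : ℝ}
    (hw : ∀ i ∈ s, 0 ≤ w i) (hW : 0 < ∑ i ∈ s, w i) (hE : 0 ≤ E)
    (ha : ∑ i ∈ s, w i * f i ≤ a) (hu : ∀ i ∈ s, u ≤ E * (f i + b)) :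
    u ≤ E * (a / ∑ i ∈ s, w i + b) := by
  have hweighted : (∑ i ∈ s, w i) * u ≤ E * (∑ i ∈ s, w i * f i) + E * b * ∑ i ∈ s, w i := by
    calc (∑ i ∈ s, w i) * u = ∑ i ∈ s, w i * u := sum_mul _ _ _
      _ ≤ ∑ i ∈ s, w i * (E * (f i + b)) :=
        sum_le_sum fun i hi => mul_le_mul_of_nonneg_left (hu i hi) (hw i hi)
      _ = E * (∑ i ∈ s, w i * f i) + E * b * ∑ i ∈ s, w i := by
        rw [mul_sum, mul_sum, ← sum_add_distrib]
        exact sum_congr rfl fun i _ => by ring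
  rw [mul_add, mul_div_assoc', div_add' _ _ _ hW.ne', le_div_iff₀ hW]
  nlinarith

end DiscreteGronwall

open DiscreteGronwall

theorem composite_discrete_uniform_gronwall_general
    (G H P V Δt : ℕ → ℝ) (n₀ K₀ N : ℕ) (δ a₀ a₁ a₂ a₃ r : ℝ)
    (hG : ∀ n, 0 ≤ G n) (hH : ∀ n, 0 ≤ H n) (hP : ∀ n, 0 ≤ P n)
    (hV : ∀ n, 0 ≤ V n) (hΔt : ∀ n, 0 ≤ Δt n)
    (hrec : ∀ n, n₀ ≤ n → V (n + 1) ≤ V n + Δt n * (G n * V n + H n * V (n + 1) + P n))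
    (hK₀ : n₀ ≤ K₀)
    (hr : r = ∑ n ∈ Finset.Icc K₀ (N + K₀), Δt n)
    (ha₀ : ∑ n ∈ Finset.Icc K₀ (N + K₀), Δt n * G n ≤ a₀)
    (ha₁ : ∑ n ∈ Finset.Icc K₀ (N + K₀), Δt n * H n ≤ a₁)
    (ha₂ : ∑ n ∈ Finset.Icc K₀ (N + K₀), Δt n * P n ≤ a₂)
    (ha₃ : ∑ n ∈ Finset.Icc K₀ (N + K₀), Δt n * V n ≤ a₃)
    (hδ : 0 < δ)
    (hstep : ∀ n, n₀ ≤ n → Δt n * H n ≤ 1 - δ)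
    (hrpos : 0 < r) :
    V (N + K₀ + 1) ≤ Real.exp (a₀ + a₁ / δ) * (a₃ / r + a₂) := by
  have hrate : ∀ n, 0 ≤ Δt n * G n + Δt n * H n / δ := fun n => by
    have := hG n; have := hH n; have := hΔt n; positivity
  have hsource : ∀ n, 0 ≤ Δt n * P n := fun n => mul_nonneg (hΔt n) (hP n)
  have hrate_sum : ∑ n ∈ Icc K₀ (N + K₀), (Δt n * G n + Δt n * H n / δ) ≤ a₀ + a₁ / δ := by
    rw [sum_add_distrib, ← sum_div]; gcongr
  have hfrom : ∀ m ∈ Icc K₀ (N + K₀), V (N + K₀ + 1) ≤ exp (a₀ + a₁ / δ) * (V m + a₂) := by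
    intro m hm
    obtain ⟨hKm, hmT⟩ := mem_Icc.1 hm
    have hsub : Icc m (N + K₀) ⊆ Icc K₀ (N + K₀) := Icc_subset_Icc_left hKm
    have hgron := le_exp_sum_mul_add_sum (m := m) (fun n _ => hrate n) (fun n _ => hsource n)
      (fun n hn => le_exp_mul_of_le_implicit_step hδ (hV n) (hΔt n) (hG n) (hH n) (hP n)
        (hstep n (by omega)) (hrec n (by omega))) (N + K₀ + 1) (by omega)
    rw [Ico_add_one_right_eq_Icc] at hgron
    refine hgron.trans (mul_le_mul (exp_le_exp.2 ?_) (add_le_add_right ?_ _)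
      (add_nonneg (hV m) (sum_nonneg fun n _ => hsource n)) (exp_pos _).le)
    · exact (sum_le_sum_of_subset_of_nonneg hsub fun n _ _ => hrate n).trans hrate_sum
    · exact (sum_le_sum_of_subset_of_nonneg hsub fun n _ _ => hsource n).trans ha₂
  rw [hr] at hrpos ⊢
  exact le_mul_div_add_of_forall_le (fun n _ => hΔt n) hrpos (exp_pos _).le ha₃ hfrom

/-- Composite discrete uniform Gronwall inequality. -/
theorem composite_discrete_uniform_gronwall
    (G H P V Δt : ℕ → ℝ) (n₀ K₀ N : ℕ) (δ a₀ a₁ a₂ a₃ r : ℝ)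
    (hG : ∀ n, 0 ≤ G n) (hH : ∀ n, 0 ≤ H n) (hP : ∀ n, 0 ≤ P n)
    (hV : ∀ n, 0 ≤ V n) (hΔt : ∀ n, 0 ≤ Δt n)
    (hrec : ∀ n, n₀ ≤ n → V (n + 1) ≤ V n + Δt n * (G n * V n + H n * V (n + 1) + P n))
    (hK₀ : n₀ ≤ K₀)
    (hr : r = ∑ n ∈ Finset.Icc K₀ (N + K₀), Δt n)
    (ha₀ : ∑ n ∈ Finset.Icc K₀ (N + K₀), Δt n * G n ≤ a₀)
    (ha₁ : ∑ n ∈ Finset.Icc K₀ (N + K₀), Δt n * H n ≤ a₁)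
    (ha₂ : ∑ n ∈ Finset.Icc K₀ (N + K₀), Δt n * P n ≤ a₂)
    (ha₃ : ∑ n ∈ Finset.Icc K₀ (N + K₀), Δt n * V n ≤ a₃)
    (hδ : 0 < δ) (hδ1 : δ ≤ 1)
    (hstep : ∀ n, n₀ ≤ n → Δt n * H n ≤ 1 - δ)
    (hrpos : 0 < r) :
    V (N + K₀ + 1) ≤ Real.exp (a₀ + a₁ / δ) * (a₃ / r + a₂) :=
  composite_discrete_uniform_gronwall_general G H P V Δt n₀ K₀ N δ a₀ a₁ a₂ a₃ r hG hH hP hV hΔt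
    hrec hK₀ hr ha₀ ha₁ ha₂ ha₃ hδ hstep hrpos
end

section
/- Under the hypotheses of the composite discrete uniform Gronwall inequality, for any m with n_0 ≤ K_0 ≤ m ≤ N+K_0 one has V_{N+K_0+1} ≤ (V_m + a_2) exp( Σ_{n=m}^{N+K_0} Δt_n (G_n + H_n/δ) ). -/
/-!
Solving the implicit step for `V (n+1)` gives
`V (n+1) ≤ ((1 + Δt G) V n + Δt P) / (1 - Δt H) ≤ (V n + Δt P) exp (Δt (G + H / δ))`,
since `(1 - x)⁻¹ ≤ 1 + x / δ ≤ exp (x / δ)` for `0 ≤ x ≤ 1 - δ`. Iterating this one-step bound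
from `m` accumulates the forcing terms `Δt P` and the exponents; both are nonnegative, so each
forcing term may be charged the full exponential factor.
-/

open Finset Real

theorem inv_one_sub_le_exp_div {x δ : ℝ} (hx : 0 ≤ x) (hδ : 0 < δ) (hxδ : x ≤ 1 - δ) :
    (1 - x)⁻¹ ≤ exp (x / δ) := by
  have hx_eq : x / δ * δ = x := div_mul_cancel₀ x hδ.ne'
  have hy : 0 ≤ x / δ := div_nonneg hx hδ.le
  calc (1 - x)⁻¹ ≤ 1 + x / δ := by
        rw [inv_le_iff_one_le_mul₀ (by linarith)]
        -- (1 + y)(1 - yδ) = 1 + y(1 - δ - x) with y = x / δ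
        nlinarith [mul_nonneg hy (sub_nonneg.2 hxδ)]
    _ ≤ exp (x / δ) := by linarith [add_one_le_exp (x / δ)]

theorem le_add_mul_exp_of_implicit_step {v w a b q δ : ℝ} (hv : 0 ≤ v) (ha : 0 ≤ a)
    (hb : 0 ≤ b) (hq : 0 ≤ q) (hδ : 0 < δ) (hbδ : b ≤ 1 - δ)
    (h : w ≤ v + (a * v + b * w + q)) :
    w ≤ (v + q) * exp (a + b / δ) := by
  have hsolve : w ≤ ((1 + a) * v + q) * (1 - b)⁻¹ := by
    rw [← div_eq_mul_inv, le_div_iff₀ (by linarith)]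
    linarith
  have hexplicit : (1 + a) * v + q ≤ (v + q) * exp a := by
    nlinarith [add_one_le_exp a, one_le_exp ha]
  calc w ≤ ((1 + a) * v + q) * (1 - b)⁻¹ := hsolve
    _ ≤ (v + q) * exp a * exp (b / δ) := by
        gcongr
        · exact inv_nonneg.2 (by linarith)
        · exact inv_one_sub_le_exp_div hb hδ hbδ
    _ = (v + q) * exp (a + b / δ) := by rw [mul_assoc, ← exp_add]

theorem discrete_gronwall_of_le_add_mul_exp {u b c : ℕ → ℝ} {n₀ : ℕ}
    (hu : ∀ n ≥ n₀, u (n + 1) ≤ (u n + b n) * exp (c n)) (hc : ∀ n ≥ n₀, 0 ≤ c n)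
    (hb : ∀ n ≥ n₀, 0 ≤ b n) ⦃n : ℕ⦄ (hn : n₀ ≤ n) :
    u n ≤ (u n₀ + ∑ k ∈ Ico n₀ n, b k) * exp (∑ i ∈ Ico n₀ n, c i) := by
  induction n, hn using Nat.le_induction with
  | base => simp
  | succ k hk ih =>
    set S := ∑ i ∈ Ico n₀ k, b i
    set T := ∑ i ∈ Ico n₀ k, c i
    have hbk : b k ≤ b k * exp T :=
      le_mul_of_one_le_right (hb k hk) (one_le_exp (sum_nonneg fun i hi ↦ hc i (mem_Ico.1 hi).1))
    rw [sum_Ico_succ_top hk, sum_Ico_succ_top hk, exp_add, ← mul_assoc]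
    calc u (k + 1) ≤ (u k + b k) * exp (c k) := hu k hk
      _ ≤ ((u n₀ + S) * exp T + b k) * exp (c k) := by gcongr
      _ ≤ (u n₀ + (S + b k)) * exp T * exp (c k) := by gcongr; linarith

theorem discrete_gronwall_intermediate_bound_general
    (G H P V Δt : ℕ → ℝ) (n₀ K₀ N m : ℕ) (δ a₂ : ℝ)
    (hG : ∀ n, 0 ≤ G n) (hH : ∀ n, 0 ≤ H n) (hP : ∀ n, 0 ≤ P n)
    (hV : ∀ n, 0 ≤ V n) (hΔt : ∀ n, 0 ≤ Δt n)
    (hrec : ∀ n, n₀ ≤ n → V (n + 1) ≤ V n + Δt n * (G n * V n + H n * V (n + 1) + P n))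
    (hδ : 0 < δ)
    (hstep : ∀ n, n₀ ≤ n → Δt n * H n ≤ 1 - δ)
    (ha₂ : ∑ n ∈ Finset.Icc m (N + K₀), Δt n * P n ≤ a₂)
    (hm₁ : n₀ ≤ K₀) (hm₂ : K₀ ≤ m) (hm₃ : m ≤ N + K₀) :
    V (N + K₀ + 1) ≤ (V m + a₂) *
      Real.exp (∑ n ∈ Finset.Icc m (N + K₀), Δt n * (G n + H n / δ)) := by
  have hn₀m : n₀ ≤ m := hm₁.trans hm₂
  have hstep_exp : ∀ n ≥ m,
      V (n + 1) ≤ (V n + Δt n * P n) * exp (Δt n * (G n + H n / δ)) := fun n hn ↦ by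
    have hn' := hn₀m.trans hn
    have := le_add_mul_exp_of_implicit_step (hV n) (mul_nonneg (hΔt n) (hG n))
      (mul_nonneg (hΔt n) (hH n)) (mul_nonneg (hΔt n) (hP n)) hδ (hstep n hn')
      ((hrec n hn').trans_eq (by ring))
    simpa only [mul_add, mul_div_assoc] using this
  have hgronwall := discrete_gronwall_of_le_add_mul_exp hstep_exp
    (fun n _ ↦ mul_nonneg (hΔt n) (add_nonneg (hG n) (div_nonneg (hH n) hδ.le)))
    (fun n _ ↦ mul_nonneg (hΔt n) (hP n)) (n := N + K₀ + 1) (by omega)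
  rw [Ico_add_one_right_eq_Icc] at hgronwall
  exact hgronwall.trans (by gcongr)

theorem discrete_gronwall_intermediate_bound
    (G H P V Δt : ℕ → ℝ) (n₀ K₀ N m : ℕ) (δ a₂ : ℝ)
    (hG : ∀ n, 0 ≤ G n) (hH : ∀ n, 0 ≤ H n) (hP : ∀ n, 0 ≤ P n)
    (hV : ∀ n, 0 ≤ V n) (hΔt : ∀ n, 0 ≤ Δt n)
    (hrec : ∀ n, n₀ ≤ n → V (n + 1) ≤ V n + Δt n * (G n * V n + H n * V (n + 1) + P n))
    (hδ : 0 < δ) (hδ1 : δ ≤ 1)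
    (hstep : ∀ n, n₀ ≤ n → Δt n * H n ≤ 1 - δ)
    (ha₂ : ∑ n ∈ Finset.Icc m (N + K₀), Δt n * P n ≤ a₂)
    (hm₁ : n₀ ≤ K₀) (hm₂ : K₀ ≤ m) (hm₃ : m ≤ N + K₀) :
    V (N + K₀ + 1) ≤ (V m + a₂) *
      Real.exp (∑ n ∈ Finset.Icc m (N + K₀), Δt n * (G n + H n / δ)) :=
  discrete_gronwall_intermediate_bound_general G H P V Δt n₀ K₀ N m δ a₂ hG hH hP hV hΔt hrec hδ
    hstep ha₂ hm₁ hm₂ hm₃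
end
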